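/- For t ≥ 3, any partition λ in DS(t) of largest size satisfies 2t−1 ∈ MD(λ), and moreover 1, 3, and 2t−3 are not in MD(λ). -/

import Mathlib

/-- An integer partition, given by its (weakly decreasing, eventually zero)
sequence of parts, indexed from `0`. -/
structure IntPartition where
  parts : ℕ → ℕ
  antitone : ∀ i j, i ≤ j → parts j ≤ parts i
  finite : ∃ N, ∀ i, N ≤ i → parts i = 0

namespace IntPartition

/-- The size of a partition: the sum of its parts. -/
noncomputable def size (lam : IntPartition) : ℕ := ∑ᶠ i, lam.parts i

/-- The parts of the conjugate partition: `conjParts lam j` is the number of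
rows `i` with `lam.parts i > j` (rows and columns are `0`-indexed). -/
noncomputable def conjParts (lam : IntPartition) (j : ℕ) : ℕ :=
  Nat.card {i : ℕ | j < lam.parts i}

/-- A partition is self-conjugate if it equals its conjugate. -/
def IsSelfConjugate (lam : IntPartition) : Prop :=
  ∀ j, lam.conjParts j = lam.parts j

/-- `(i, j)` (both `0`-indexed) is a cell of the Young diagram of `lam`. -/
def IsCell (lam : IntPartition) (i j : ℕ) : Prop := j < lam.parts i

/-- The hook length of the cell `(i, j)` (both `0`-indexed): the number of
cells directly to the right, plus the number directly below, plus one. -/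
noncomputable def hook (lam : IntPartition) (i j : ℕ) : ℕ :=
  (lam.parts i - j) + (lam.conjParts j - i) - 1

/-- A partition is a `t`-core if no hook length is divisible by `t`. -/
def IsCore (lam : IntPartition) (t : ℕ) : Prop :=
  ∀ i j, lam.IsCell i j → ¬ (t ∣ lam.hook i j)

/-- The size of the Durfee square: the largest `k` such that the partition has
at least `k` parts of size at least `k`. -/
noncomputable def durfee (lam : IntPartition) : ℕ :=
  Nat.card {i : ℕ | i < lam.parts i}

/-- A partition has distinct parts if its (nonzero) parts are pairwise different. -/
def DistinctParts (lam : IntPartition) : Prop :=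
  ∀ i j, lam.parts i ≠ 0 → lam.parts j ≠ 0 → i ≠ j → lam.parts i ≠ lam.parts j

/-- The set of main diagonal hook lengths of `lam`. -/
noncomputable def MD (lam : IntPartition) : Set ℕ :=
  {h | ∃ i < lam.durfee, lam.hook i i = h}

/-- `lam ∈ DS(t)`: `lam` is a self-conjugate `(t, t+1)`-core partition whose
first `durfee lam` parts are pairwise distinct. -/
def InDS (lam : IntPartition) (t : ℕ) : Prop :=
  lam.IsSelfConjugate ∧ lam.IsCore t ∧ lam.IsCore (t + 1) ∧
    ∀ i j, i < lam.durfee → j < lam.durfee → i ≠ j → lam.parts i ≠ lam.parts j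

end IntPartition

/-
Write `a₀ > a₁ > ⋯` for the shifted Frobenius coordinates `parts i - i` of a self-conjugate
partition `λ`: its main diagonal hooks are `2aᵢ - 1`, its size is `∑ (2aᵢ - 1)`, and the hook of
the cell `(i, j)` is `aᵢ + aⱼ - 1`. So `λ ∈ DS(t)` says: the `aᵢ` differ pairwise by at least 2 and
no `aᵢ + aⱼ` is `t + 1` or `t + 2`; moreover `a₀ ≤ t`. Conversely every finite set of positive
integers `≤ t` with these properties comes from some `λ ∈ DS(t)`. The bound `a₀ ≤ t` and the
converse both go through the abacus: `λ` is a `t`-core iff its beta numbers are closed under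
subtracting `t`.

If `t` were not among the `aᵢ`, all of them would be `< t`. Trading the entries `1`, `2`, `t - 1`
for `t` keeps the set admissible, and what is removed is `{2}` or a subset of `{1, t - 1}`, of total
weight at most `2t - 2 < 2t - 1`: a larger partition in `DS(t)`. Once `a₀ = t`, the entries `1`,
`2` and `t - 1` are excluded, i.e. `1, 3, 2t - 3 ∉ MD(λ)`.
-/

open Finset

theorem Nat.lt_card_setOf_iff_of_lowerSet {p : ℕ → Prop} (hp : ∀ i j, i ≤ j → p j → p i)
    (hbdd : ∃ N, ∀ i, N ≤ i → ¬ p i) (i : ℕ) : i < Nat.card {i | p i} ↔ p i := by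
  obtain ⟨N, hN⟩ := hbdd
  rcases IsLowerSet.eq_univ_or_Iio (s := {i | p i}) (fun j k hkj hj => hp k j hkj hj) with
    h | ⟨a, h⟩
  · have : N ∈ {i | p i} := h ▸ Set.mem_univ N
    exact absurd this (hN N le_rfl)
  · rw [h, Nat.card_coe_set_eq, Set.ncard_Iio_nat, ← Set.mem_Iio, ← h]
    rfl

theorem Nat.add_mul_le_of_succ_add_le {f : ℕ → ℕ} {c n : ℕ}
    (hstep : ∀ i, i + 1 < n → f (i + 1) + c ≤ f i) {i j : ℕ} (hij : i ≤ j) (hj : j < n) :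
    f j + c * (j - i) ≤ f i := by
  obtain ⟨k, rfl⟩ := Nat.exists_eq_add_of_le hij
  induction k with
  | zero => simp
  | succ k ih =>
    have h1 := hstep (i + k) (by omega)
    have h2 := ih (by omega) (by omega)
    rw [Nat.add_sub_cancel_left] at h2 ⊢
    rw [← add_assoc, mul_add_one]
    omega

theorem Finset.exists_strictAntiOn_image_range (A : Finset ℕ) :
    ∃ a : ℕ → ℕ, StrictAntiOn a (Set.Iio #A) ∧ (range #A).image a = A := by
  set e := A.orderEmbOfFin rfl
  refine ⟨fun i => if h : i < #A then e (Fin.rev ⟨i, h⟩) else 0, ?_, ?_⟩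
  · intro i hi j hj hij
    simp only [Set.mem_Iio] at hi hj
    simp only [hi, hj, dite_true]
    exact e.strictMono (Fin.rev_lt_rev.2 hij)
  · ext x
    simp only [mem_image, mem_range]
    constructor
    · rintro ⟨i, hi, rfl⟩
      simp only [hi, dite_true]
      exact A.orderEmbOfFin_mem rfl _
    · intro hx
      obtain ⟨f, rfl⟩ : x ∈ Set.range e := by rw [A.range_orderEmbOfFin]; exact hx
      refine ⟨f.rev, f.rev.isLt, ?_⟩
      rw [dif_pos f.rev.isLt, Fin.eta, Fin.rev_rev]

namespace IntPartition

variable (lam : IntPartition)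

theorem lt_conjParts_iff (i j : ℕ) : i < lam.conjParts j ↔ j < lam.parts i := by
  obtain ⟨N, hN⟩ := lam.finite
  refine Nat.lt_card_setOf_iff_of_lowerSet (fun k l hkl h => h.trans_le (lam.antitone k l hkl))
    ⟨N, fun k hk => ?_⟩ i
  simp [hN k hk]

theorem lt_durfee_iff (i : ℕ) : i < lam.durfee ↔ i < lam.parts i := by
  obtain ⟨N, hN⟩ := lam.finite
  refine Nat.lt_card_setOf_iff_of_lowerSet
    (fun k l hkl h => by have := lam.antitone k l hkl; omega) ⟨N, fun k hk => ?_⟩ i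
  simp [hN k hk]

theorem conjParts_antitone : Antitone lam.conjParts := by
  intro j k hjk
  by_contra! h
  have := (lam.lt_conjParts_iff _ k).1 h
  have := (lam.lt_conjParts_iff (lam.conjParts j) j).2 (by omega)
  omega

/-- The beta number of row `i` with respect to the `conjParts 0` nonzero rows. -/
noncomputable def rowBeta (i : ℕ) : ℕ := lam.parts i + (lam.conjParts 0 - 1 - i)

/-- The complement of the row beta numbers is enumerated by the columns. -/
noncomputable def colBeta (j : ℕ) : ℕ := lam.conjParts 0 - lam.conjParts j + j

variable {lam}

theorem lt_conjParts_zero_of_isCell {i j : ℕ} (h : lam.IsCell i j) : i < lam.conjParts 0 :=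
  (lam.lt_conjParts_iff i 0).2 (Nat.zero_le j |>.trans_lt h)

theorem hook_add_colBeta {i j : ℕ} (h : lam.IsCell i j) :
    lam.hook i j + lam.colBeta j = lam.rowBeta i := by
  have h1 : i < lam.conjParts j := (lam.lt_conjParts_iff i j).2 h
  have h2 := lam.conjParts_antitone (Nat.zero_le j)
  have h3 := lt_conjParts_zero_of_isCell h
  unfold hook rowBeta colBeta IsCell at *
  omega

theorem colBeta_lt_rowBeta_of_isCell {i j : ℕ} (h : lam.IsCell i j) :
    lam.colBeta j < lam.rowBeta i := by
  have h1 : i < lam.conjParts j := (lam.lt_conjParts_iff i j).2 h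
  have := hook_add_colBeta h
  unfold hook IsCell at *
  omega

theorem rowBeta_lt_colBeta_of_not_isCell {i j : ℕ} (hi : i < lam.conjParts 0)
    (hc : ¬ lam.IsCell i j) : lam.rowBeta i < lam.colBeta j := by
  have h1 : ¬ i < lam.conjParts j := fun h => hc ((lam.lt_conjParts_iff i j).1 h)
  have h2 := lam.conjParts_antitone (Nat.zero_le j)
  unfold rowBeta colBeta IsCell at *
  omega

theorem rowBeta_ne_colBeta {i : ℕ} (hi : i < lam.conjParts 0) (j : ℕ) :
    lam.rowBeta i ≠ lam.colBeta j := by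
  by_cases hc : lam.IsCell i j
  · exact (colBeta_lt_rowBeta_of_isCell hc).ne'
  · exact (rowBeta_lt_colBeta_of_not_isCell hi hc).ne

theorem exists_rowBeta_or_colBeta (v : ℕ) :
    (∃ i < lam.conjParts 0, lam.rowBeta i = v) ∨ ∃ j, lam.colBeta j = v := by
  have hex : ∃ n, v < lam.colBeta n := ⟨v + 1, by unfold colBeta; omega⟩
  have hn : v < lam.colBeta (Nat.find hex) := Nat.find_spec hex
  have hpos : Nat.find hex ≠ 0 := fun h => by
    rw [h] at hn
    unfold colBeta at hn
    omega
  obtain ⟨j, hj⟩ := Nat.exists_eq_add_one_of_ne_zero hpos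
  have hjv : lam.colBeta j ≤ v := not_lt.1 (Nat.find_min hex (by omega))
  rw [hj] at hn
  rcases hjv.eq_or_lt with h | h
  · exact .inr ⟨j, h⟩
  · -- `v` lies in the gap left by the rows of length exactly `j + 1`
    left
    have h1 := lam.conjParts_antitone (Nat.zero_le j)
    have h2 := lam.conjParts_antitone (Nat.le_succ j)
    have e1 : lam.colBeta j = lam.conjParts 0 - lam.conjParts j + j := rfl
    have e2 : lam.colBeta (j + 1) = lam.conjParts 0 - lam.conjParts (j + 1) + (j + 1) := rfl
    set i := lam.conjParts j - (v - lam.colBeta j)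
    have hij : j < lam.parts i := (lam.lt_conjParts_iff i j).1 (by omega)
    have hij' : ¬ j + 1 < lam.parts i := fun h' =>
      ((lam.lt_conjParts_iff i (j + 1)).2 h').not_ge (by omega)
    refine ⟨i, by omega, ?_⟩
    unfold rowBeta
    omega

theorem isCore_iff_rowBeta {t : ℕ} : lam.IsCore t ↔
    ∀ i < lam.conjParts 0, t ≤ lam.rowBeta i → ∃ i' < lam.conjParts 0,
      lam.rowBeta i' + t = lam.rowBeta i := by
  constructor
  · intro hcore i hi hti
    rcases exists_rowBeta_or_colBeta (lam.rowBeta i - t) with ⟨i', hi', hb⟩ | ⟨j, hj⟩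
    · exact ⟨i', hi', by omega⟩
    · have hcell : lam.IsCell i j := by
        by_contra hc
        have := rowBeta_lt_colBeta_of_not_isCell hi hc
        omega
      have := hook_add_colBeta hcell
      exact absurd (by omega : lam.hook i j = t) fun h => hcore i j hcell (h ▸ dvd_rfl)
  · rintro hclosed i j hcell ⟨c, hc⟩
    have hhook := hook_add_colBeta hcell
    have hdown : ∀ k ≤ c, ∃ i' < lam.conjParts 0, lam.rowBeta i' + t * k = lam.rowBeta i := by
      intro k
      induction k with
      | zero => exact fun _ => ⟨i, lt_conjParts_zero_of_isCell hcell, rfl⟩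
      | succ k ih =>
        intro hk
        obtain ⟨i', hi', hb⟩ := ih (by omega)
        have : t * (k + 1) ≤ t * c := Nat.mul_le_mul_left t hk
        obtain ⟨i'', hi'', hb'⟩ := hclosed i' hi' (by rw [mul_add_one] at this; omega)
        exact ⟨i'', hi'', by rw [mul_add_one]; omega⟩
    obtain ⟨i', hi', hb⟩ := hdown c le_rfl
    exact rowBeta_ne_colBeta hi' j (by omega)

theorem IsSelfConjugate.isCell {i j : ℕ} (hsc : lam.IsSelfConjugate) (hi : i < lam.durfee)
    (hj : j < lam.durfee) : lam.IsCell i j := by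
  rw [lt_durfee_iff] at hi hj
  rcases le_total i j with h | h
  · have := lam.antitone i j h
    show j < lam.parts i
    omega
  · rw [IsCell, ← lt_conjParts_iff, hsc]
    have := lam.antitone j i h
    omega

theorem IsSelfConjugate.hook_add_one {i j : ℕ} (hsc : lam.IsSelfConjugate)
    (hi : i < lam.durfee) (hj : j < lam.durfee) :
    lam.hook i j + 1 = (lam.parts i - i) + (lam.parts j - j) := by
  have hcell : j < lam.parts i := hsc.isCell hi hj
  have hcell' : i < lam.parts j := hsc.isCell hj hi
  have := (lt_durfee_iff lam i).1 hi
  have := (lt_durfee_iff lam j).1 hj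
  unfold hook
  rw [hsc j]
  omega

/-- The cells strictly below the diagonal, counted by rows and by columns. -/
theorem sum_min_parts_eq {M : ℕ} (hM : ∀ i, M ≤ i → lam.parts i = 0) :
    ∑ i ∈ range M, min (lam.parts i) i = ∑ j ∈ range M, (lam.conjParts j - (j + 1)) := by
  classical
  have hrow : ∀ i ∈ range M, min (lam.parts i) i =
      #((range M).bipartiteAbove (fun i j => j < i ∧ j < lam.parts i) i) := by
    intro i hi
    rw [bipartiteAbove, ← card_range (min (lam.parts i) i)]
    congr 1
    ext j
    simp only [mem_filter, mem_range] at hi ⊢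
    omega
  have hcol : ∀ j ∈ range M, lam.conjParts j - (j + 1) =
      #((range M).bipartiteBelow (fun i j => j < i ∧ j < lam.parts i) j) := by
    intro j _
    rw [bipartiteBelow, Nat.sub_add_eq, ← Nat.card_Ioo j (lam.conjParts j)]
    congr 1
    ext i
    simp only [mem_filter, mem_range, mem_Ioo, ← lt_conjParts_iff]
    constructor
    · rintro ⟨hji, hi⟩
      have hpart : j < lam.parts i := (lam.lt_conjParts_iff i j).1 hi
      exact ⟨lt_of_not_ge fun hiM => by rw [hM i hiM] at hpart; omega, hji, hi⟩
    · rintro ⟨-, hji, hi⟩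
      exact ⟨hji, hi⟩
  rw [sum_congr rfl hrow, sum_congr rfl hcol,
    sum_card_bipartiteAbove_eq_sum_card_bipartiteBelow]

theorem IsSelfConjugate.size_eq (hsc : lam.IsSelfConjugate) :
    lam.size = ∑ i ∈ range lam.durfee, (2 * (lam.parts i - i) - 1) := by
  obtain ⟨M, hM⟩ := lam.finite
  have hdM : lam.durfee ≤ M := by
    by_contra h
    have := (lt_durfee_iff lam M).1 (by omega)
    rw [hM M le_rfl] at this
    omega
  have hsize : lam.size = ∑ i ∈ range M, lam.parts i :=
    finsum_eq_sum_of_support_subset _ fun i hi => by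
      simp only [Function.mem_support, coe_range, Set.mem_Iio] at hi ⊢
      exact by_contra fun h => hi (hM i (by omega))
  calc lam.size = ∑ i ∈ range M, ((lam.parts i - i) + min (lam.parts i) i) := by
        rw [hsize]
        exact sum_congr rfl fun i _ => by omega
    _ = ∑ i ∈ range M, ((lam.parts i - i) + (lam.parts i - (i + 1))) := by
        rw [sum_add_distrib, sum_add_distrib, sum_min_parts_eq hM]
        rw [show lam.conjParts = lam.parts from funext hsc]
    _ = ∑ i ∈ range M, (2 * (lam.parts i - i) - 1) := sum_congr rfl fun i _ => by omega
    _ = ∑ i ∈ range lam.durfee, (2 * (lam.parts i - i) - 1) := by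
        refine (sum_subset (range_subset_range.2 hdM) fun i _ hi => ?_).symm
        rw [mem_range, lt_durfee_iff] at hi
        omega

section Frobenius

variable {m : ℕ} {a : ℕ → ℕ} {i j j' : ℕ}

/-- `(i, j)` lies on the diagonal hook through `(k, k)`, `k = min i j`, whose arm and leg both
have `a k - 1` cells. -/
def FrobeniusCell (m : ℕ) (a : ℕ → ℕ) (i j : ℕ) : Prop :=
  min i j < m ∧ max i j < a (min i j) + min i j

theorem frobeniusCell_comm : FrobeniusCell m a i j ↔ FrobeniusCell m a j i := by
  rw [FrobeniusCell, FrobeniusCell, min_comm, max_comm]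

variable (hstep : ∀ i, i + 1 < m → a (i + 1) < a i) (hpos : ∀ i < m, 0 < a i)

include hstep in
theorem add_le_add_of_frobenius_step (hij : i ≤ j) (hj : j < m) : a j + j ≤ a i + i := by
  have := Nat.add_mul_le_of_succ_add_le (f := a) (c := 1) hstep hij hj
  omega

include hstep in
theorem FrobeniusCell.lt (h : FrobeniusCell m a i j) : j < a 0 := by
  have := add_le_add_of_frobenius_step hstep (Nat.zero_le _) h.1
  have := h.2
  omega

include hstep hpos in
theorem FrobeniusCell.of_le (h : FrobeniusCell m a i j') (hj : j ≤ j') :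
    FrobeniusCell m a i j := by
  obtain ⟨h1, h2⟩ := h
  unfold FrobeniusCell
  rcases le_total j' i with hi | hi
  · rw [min_eq_right hi] at h1 h2
    rw [max_eq_left hi] at h2
    have := add_le_add_of_frobenius_step hstep hj h1
    rw [min_eq_right (hj.trans hi), max_eq_left (hj.trans hi)]
    omega
  · rw [min_eq_left hi] at h1 h2
    rw [max_eq_right hi] at h2
    rcases le_total i j with hij | hji
    · rw [min_eq_left hij, max_eq_right hij]
      omega
    · have := add_le_add_of_frobenius_step hstep hji h1
      have := hpos i h1
      rw [min_eq_right hji, max_eq_left hji]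
      omega

include hstep hpos in
theorem lt_card_frobeniusCell_iff :
    j < Nat.card {j | FrobeniusCell m a i j} ↔ FrobeniusCell m a i j :=
  Nat.lt_card_setOf_iff_of_lowerSet (fun _ _ h hc => hc.of_le hstep hpos h)
    ⟨a 0, fun _ hk hc => (hc.lt hstep).not_ge hk⟩ j

/-- The self-conjugate partition with shifted Frobenius coordinates `a 0 > ⋯ > a (m - 1)`,
i.e. `parts i = a i + i` for `i < m`. -/
noncomputable def ofFrobenius : IntPartition where
  parts i := Nat.card {j | FrobeniusCell m a i j}
  antitone i i' h := le_of_forall_lt fun k hk => by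
    rw [lt_card_frobeniusCell_iff hstep hpos, frobeniusCell_comm] at hk ⊢
    exact hk.of_le hstep hpos h
  finite := ⟨a 0, fun i hi => Nat.eq_zero_of_not_pos fun h => by
    rw [lt_card_frobeniusCell_iff hstep hpos, frobeniusCell_comm] at h
    exact (h.lt hstep).not_ge hi⟩

theorem lt_ofFrobenius_parts_iff :
    j < (ofFrobenius hstep hpos).parts i ↔ FrobeniusCell m a i j :=
  lt_card_frobeniusCell_iff hstep hpos

theorem ofFrobenius_isSelfConjugate : (ofFrobenius hstep hpos).IsSelfConjugate := fun j =>
  eq_of_forall_lt_iff fun i => by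
    rw [lt_conjParts_iff, lt_ofFrobenius_parts_iff, lt_ofFrobenius_parts_iff, frobeniusCell_comm]

theorem ofFrobenius_parts_of_lt (hi : i < m) : (ofFrobenius hstep hpos).parts i = a i + i :=
  eq_of_forall_lt_iff fun j => by
    rw [lt_ofFrobenius_parts_iff]
    have := hpos i hi
    rcases le_total i j with hij | hji
    · rw [FrobeniusCell, min_eq_left hij, max_eq_right hij]
      omega
    · have := add_le_add_of_frobenius_step hstep hji hi
      rw [FrobeniusCell, min_eq_right hji, max_eq_left hji]
      omega

theorem ofFrobenius_parts_le (hi : m ≤ i) : (ofFrobenius hstep hpos).parts i ≤ m :=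
  le_of_forall_lt fun j hj => by
    rw [lt_ofFrobenius_parts_iff] at hj
    have := hj.1
    omega

theorem ofFrobenius_durfee : (ofFrobenius hstep hpos).durfee = m :=
  eq_of_forall_lt_iff fun i => by
    rw [lt_durfee_iff, lt_ofFrobenius_parts_iff, FrobeniusCell, min_self, max_self]
    exact ⟨And.left, fun hi => ⟨hi, by have := hpos i hi; omega⟩⟩

theorem ofFrobenius_size :
    (ofFrobenius hstep hpos).size = ∑ i ∈ range m, (2 * a i - 1) := by
  rw [(ofFrobenius_isSelfConjugate hstep hpos).size_eq, ofFrobenius_durfee]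
  refine sum_congr rfl fun i hi => ?_
  rw [ofFrobenius_parts_of_lt hstep hpos (mem_range.1 hi), Nat.add_sub_cancel]

theorem ofFrobenius_isCore {t : ℕ} (hle : ∀ i < m, a i ≤ t)
    (hsum : ∀ i < m, ∀ j < m, a i + a j ≠ t + 1) : (ofFrobenius hstep hpos).IsCore t := by
  set μ := ofFrobenius hstep hpos
  have hsc : μ.IsSelfConjugate := ofFrobenius_isSelfConjugate hstep hpos
  have hN_le : μ.parts 0 ≤ t := by
    rcases Nat.eq_zero_or_pos m with hm | hm
    · exact (ofFrobenius_parts_le hstep hpos hm.le).trans (hm ▸ Nat.zero_le t)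
    · exact (ofFrobenius_parts_of_lt hstep hpos hm).trans_le (hle 0 hm)
  have hcolBeta (j : ℕ) : μ.colBeta j = μ.parts 0 - μ.parts j + j := by
    rw [colBeta, hsc 0, hsc j]
  rw [isCore_iff_rowBeta]
  intro i hi hti
  rw [hsc 0] at hi ⊢
  have hrow : μ.rowBeta i = μ.parts i + (μ.parts 0 - 1 - i) := by rw [rowBeta, hsc 0]
  rcases lt_or_ge i m with him | hmi
  · have hai : μ.parts i = a i + i := ofFrobenius_parts_of_lt hstep hpos him
    have ha0 : μ.parts 0 = a 0 := ofFrobenius_parts_of_lt hstep hpos (i.zero_le.trans_lt him)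
    have := hle i him
    -- `rowBeta i - t = a i + a 0 - 1 - t`, while the columns `j < m` have `colBeta j = a 0 - a j`
    rcases exists_rowBeta_or_colBeta (μ.rowBeta i - t) with ⟨i', hi', hb⟩ | ⟨j, hj⟩
    · exact ⟨i', hsc 0 ▸ hi', by omega⟩
    · exfalso
      rw [hcolBeta] at hj
      rcases lt_or_ge j m with hjm | hmj
      · have haj : μ.parts j = a j + j := ofFrobenius_parts_of_lt hstep hpos hjm
        have := add_le_add_of_frobenius_step hstep (Nat.zero_le j) hjm
        exact hsum i him j hjm (by omega)
      · have : μ.parts j ≤ m := ofFrobenius_parts_le hstep hpos hmj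
        omega
  · have : μ.parts i ≤ m := ofFrobenius_parts_le hstep hpos hmi
    omega

end Frobenius

/-- The conditions defining `DS(t)`, read on `{(h + 1) / 2 | h ∈ MD(λ)}`. -/
structure DSAdmissible (t : ℕ) (A : Finset ℕ) : Prop where
  pos : ∀ a ∈ A, 0 < a
  le : ∀ a ∈ A, a ≤ t
  add_two_le : ∀ a ∈ A, ∀ b ∈ A, a < b → a + 2 ≤ b
  add_ne : ∀ a ∈ A, ∀ b ∈ A, a + b ≠ t + 1 ∧ a + b ≠ t + 2

/-- The shifted Frobenius coordinates `parts i - i`; for a self-conjugate partition the main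
diagonal hooks are `2 * (parts i - i) - 1`. -/
noncomputable def frobeniusSet (lam : IntPartition) : Finset ℕ :=
  (range lam.durfee).image fun i => lam.parts i - i

variable {t : ℕ}

theorem IsSelfConjugate.mem_MD_iff (hsc : lam.IsSelfConjugate) {h : ℕ} :
    h ∈ lam.MD ↔ ∃ a ∈ lam.frobeniusSet, 2 * a - 1 = h := by
  simp only [MD, frobeniusSet, mem_image, mem_range]
  constructor
  · rintro ⟨i, hi, rfl⟩
    exact ⟨_, ⟨i, hi, rfl⟩, by have := hsc.hook_add_one hi hi; omega⟩
  · rintro ⟨_, ⟨i, hi, rfl⟩, rfl⟩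
    exact ⟨i, hi, by have := hsc.hook_add_one hi hi; omega⟩

theorem InDS.frobenius_add_two_le (hlam : lam.InDS t) {i j : ℕ} (hij : i < j)
    (hj : j < lam.durfee) : lam.parts j - j + 2 ≤ lam.parts i - i := by
  have hstep : ∀ k, k + 1 < lam.durfee → lam.parts (k + 1) - (k + 1) + 2 ≤ lam.parts k - k := by
    intro k hk
    have := lam.antitone k (k + 1) k.le_succ
    have := hlam.2.2.2 k (k + 1) (by omega) hk k.succ_ne_self.symm
    have := (lt_durfee_iff lam (k + 1)).1 hk
    omega
  have := Nat.add_mul_le_of_succ_add_le (f := fun k => lam.parts k - k) hstep hij.le hj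
  omega

theorem InDS.frobenius_add_ne (hlam : lam.InDS t) {i j : ℕ} (hi : i < lam.durfee)
    (hj : j < lam.durfee) :
    lam.parts i - i + (lam.parts j - j) ≠ t + 1 ∧ lam.parts i - i + (lam.parts j - j) ≠ t + 2 := by
  obtain ⟨hsc, hcore, hcore', -⟩ := hlam
  have hcell := hsc.isCell hi hj
  have := hsc.hook_add_one hi hj
  exact ⟨fun h => hcore i j hcell ⟨1, by omega⟩, fun h => hcore' i j hcell ⟨1, by omega⟩⟩

/-- The longest row has length at most `t`: otherwise the abacus produces a diagonal entry
`parts 0 - t` and, if `parts 0 > t + 1`, also `parts 0 - t - 1`. -/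
theorem InDS.parts_zero_le (hlam : lam.InDS t) (ht : 0 < t) : lam.parts 0 ≤ t := by
  by_contra! hbig
  have hsc := hlam.1
  have hN := hsc 0
  have hd : 0 < lam.durfee := (lt_durfee_iff lam 0).2 (by omega)
  have hrow (i : ℕ) : lam.rowBeta i = lam.parts i + (lam.parts 0 - 1 - i) := by
    rw [rowBeta, hN]
  have hdiag (s : ℕ) (hs : 0 < s) (hcore : lam.IsCore s) (hlt : s < lam.parts 0) :
      ∃ i, 0 < i ∧ i < lam.durfee ∧ lam.parts i - i + s = lam.parts 0 := by
    obtain ⟨i, hi, hb⟩ := isCore_iff_rowBeta.1 hcore 0 (by omega) (by rw [hrow]; omega)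
    rw [hN] at hi
    rw [hrow, hrow] at hb
    have hi_d : i < lam.durfee := (lt_durfee_iff lam i).2 (by omega)
    exact ⟨i, Nat.pos_of_ne_zero fun h => by subst h; omega, hi_d, by omega⟩
  obtain ⟨i, hi0, hi, hai⟩ := hdiag t ht hlam.2.1 hbig
  rcases (show lam.parts 0 = t + 1 ∨ t + 1 < lam.parts 0 by omega) with h | h
  · exact (hlam.frobenius_add_ne hd hi).2 (by omega)
  · obtain ⟨j, hj0, hj, haj⟩ := hdiag (t + 1) (by omega) hlam.2.2.1 h
    rcases lt_trichotomy i j with hij | rfl | hji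
    · have := hlam.frobenius_add_two_le hij hj
      omega
    · omega
    · have := hlam.frobenius_add_two_le hji hi
      omega

theorem InDS.dsAdmissible (hlam : lam.InDS t) (ht : 0 < t) :
    DSAdmissible t lam.frobeniusSet := by
  refine ⟨?_, ?_, ?_, ?_⟩ <;> simp only [frobeniusSet, forall_mem_image, mem_range]
  · intro i hi
    have := (lt_durfee_iff lam i).1 hi
    omega
  · intro i hi
    have := hlam.parts_zero_le ht
    rcases Nat.eq_zero_or_pos i with rfl | hi0
    · omega
    · have := hlam.frobenius_add_two_le hi0 hi
      omega
  · intro i hi j hj hlt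
    rcases lt_or_ge j i with hji | hij
    · exact hlam.frobenius_add_two_le hji hi
    · rcases hij.eq_or_lt with rfl | hij
      · omega
      · have := hlam.frobenius_add_two_le hij hj
        omega
  · exact fun i hi j hj => hlam.frobenius_add_ne hi hj

theorem InDS.size_eq (hlam : lam.InDS t) :
    lam.size = ∑ a ∈ lam.frobeniusSet, (2 * a - 1) := by
  rw [hlam.1.size_eq, frobeniusSet, sum_image]
  intro i hi j hj hij
  simp only [coe_range, Set.mem_Iio] at hi hj hij
  by_contra hne
  rcases Nat.lt_or_gt_of_ne hne with h | h
  · have := hlam.frobenius_add_two_le h hj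
    omega
  · have := hlam.frobenius_add_two_le h hi
    omega

variable {A : Finset ℕ}

theorem exists_inDS_of_dsAdmissible (hA : DSAdmissible t A) :
    ∃ μ : IntPartition, μ.InDS t ∧ μ.size = ∑ a ∈ A, (2 * a - 1) := by
  obtain ⟨a, hanti, himage⟩ := A.exists_strictAntiOn_image_range
  have hmem (i : ℕ) (hi : i < #A) : a i ∈ A := himage ▸ mem_image_of_mem a (mem_range.2 hi)
  have hlt {i j : ℕ} (hij : i < j) (hj : j < #A) : a j < a i :=
    hanti (Set.mem_Iio.2 (hij.trans hj)) (Set.mem_Iio.2 hj) hij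
  have hstep (i : ℕ) (hi : i + 1 < #A) : a (i + 1) < a i := hlt i.lt_succ_self hi
  have hpos (i : ℕ) (hi : i < #A) : 0 < a i := hA.pos _ (hmem i hi)
  have hle (i : ℕ) (hi : i < #A) : a i ≤ t := hA.le _ (hmem i hi)
  have hadd (i : ℕ) (hi : i < #A) (j : ℕ) (hj : j < #A) := hA.add_ne _ (hmem i hi) _ (hmem j hj)
  refine ⟨ofFrobenius hstep hpos, ⟨ofFrobenius_isSelfConjugate hstep hpos,
    ofFrobenius_isCore hstep hpos hle fun i hi j hj => (hadd i hi j hj).1,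
    ofFrobenius_isCore hstep hpos (fun i hi => (hle i hi).trans t.le_succ)
      fun i hi j hj => (hadd i hi j hj).2, ?_⟩, ?_⟩
  · intro i j hi hj hij
    rw [ofFrobenius_durfee] at hi hj
    rw [ofFrobenius_parts_of_lt hstep hpos hi, ofFrobenius_parts_of_lt hstep hpos hj]
    have hstep₂ (k : ℕ) (hk : k + 1 < #A) : a (k + 1) + 2 ≤ a k :=
      hA.add_two_le _ (hmem _ hk) _ (hmem k (by omega)) (hstep k hk)
    have hgap {i j : ℕ} (hij : i < j) (hj : j < #A) : a j + j < a i + i := by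
      have := Nat.add_mul_le_of_succ_add_le hstep₂ hij.le hj
      omega
    rcases Nat.lt_or_gt_of_ne hij with h | h
    · exact (hgap h hj).ne'
    · exact (hgap h hi).ne
  · conv_rhs => rw [← himage]
    rw [ofFrobenius_size, sum_image (by rw [coe_range]; exact hanti.injOn)]

namespace DSAdmissible

/-- Adding `t` forces removing the entries `1`, `2` and `t - 1`. -/
theorem exchange (hA : DSAdmissible t A) (ht : 3 ≤ t) :
    DSAdmissible t (insert t {a ∈ A | 3 ≤ a ∧ a + 2 ≤ t}) := by
  refine ⟨?_, ?_, ?_, ?_⟩ <;> simp only [forall_mem_insert, mem_filter, and_imp]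
  · exact ⟨by omega, fun a ha _ _ => hA.pos a ha⟩
  · exact ⟨le_rfl, fun a ha _ _ => hA.le a ha⟩
  · refine ⟨⟨by omega, fun b hb _ _ h => (h.not_ge (hA.le b hb)).elim⟩,
      fun a ha _ ha' => ⟨fun _ => by omega, fun b hb _ _ => hA.add_two_le a ha b hb⟩⟩
  · exact ⟨⟨by omega, fun b _ hb _ => by omega⟩,
      fun a _ ha _ => ⟨by omega, fun b hb _ _ => hA.add_ne a ‹_› b hb⟩⟩

theorem sum_lt_sum_exchange (hA : DSAdmissible t A) (ht : 3 ≤ t) (htA : t ∉ A) :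
    ∑ a ∈ A, (2 * a - 1) < ∑ a ∈ insert t {a ∈ A | 3 ≤ a ∧ a + 2 ≤ t}, (2 * a - 1) := by
  rw [sum_insert (fun h => htA (mem_filter.1 h).1),
    ← sum_filter_add_sum_filter_not A (fun a => 3 ≤ a ∧ a + 2 ≤ t), add_comm]
  gcongr ?_ + _
  have hrem (a : ℕ) (ha : a ∈ {a ∈ A | ¬(3 ≤ a ∧ a + 2 ≤ t)}) : a = 1 ∨ a = 2 ∨ a + 1 = t := by
    rw [mem_filter] at ha
    have := hA.pos a ha.1
    have := hA.le a ha.1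
    have : a ≠ t := fun h => htA (h ▸ ha.1)
    omega
  by_cases h2 : 2 ∈ A
  · -- then `1 ∉ A` (gap) and `t - 1 ∉ A` (sum `t + 1`)
    have hsub : {a ∈ A | ¬(3 ≤ a ∧ a + 2 ≤ t)} ⊆ {2} := fun a ha => by
      have := hrem a ha
      have := hA.add_two_le a (mem_filter.1 ha).1 2 h2
      have := hA.add_ne a (mem_filter.1 ha).1 2 h2
      rw [mem_singleton]
      omega
    refine (sum_le_sum_of_subset hsub).trans_lt ?_
    rw [sum_singleton]
    omega
  · have hsub : {a ∈ A | ¬(3 ≤ a ∧ a + 2 ≤ t)} ⊆ {1, t - 1} := fun a ha => by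
      have := hrem a ha
      have : a ≠ 2 := fun h => h2 (h ▸ (mem_filter.1 ha).1)
      rw [mem_insert, mem_singleton]
      omega
    refine (sum_le_sum_of_subset hsub).trans_lt ?_
    rw [sum_pair (by omega)]
    omega

end DSAdmissible

end IntPartition

open IntPartition in
/-- For `t ≥ 3`, any partition of largest size in `DS(t)` has `2t-1` as a main
diagonal hook length, and `1`, `3`, `2t-3` are not main diagonal hook lengths. -/
theorem md_of_largest_inDS (t : ℕ) (ht : 3 ≤ t) (lam : IntPartition)
    (hlam : lam.InDS t)
    (hmax : ∀ mu : IntPartition, mu.InDS t → mu.size ≤ lam.size) :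
    2 * t - 1 ∈ lam.MD ∧ 1 ∉ lam.MD ∧ 3 ∉ lam.MD ∧ 2 * t - 3 ∉ lam.MD := by
  have hA := hlam.dsAdmissible (by omega)
  have htA : t ∈ lam.frobeniusSet := by
    by_contra htA
    obtain ⟨mu, hmu, hsize⟩ := exists_inDS_of_dsAdmissible (hA.exchange ht)
    have := hmax mu hmu
    rw [hsize, hlam.size_eq] at this
    exact (hA.sum_lt_sum_exchange ht htA).not_ge this
  simp only [hlam.1.mem_MD_iff]
  refine ⟨⟨t, htA, rfl⟩, ?_, ?_, ?_⟩ <;> rintro ⟨a, ha, hah⟩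
  · exact (hA.add_ne a ha t htA).1 (by have := hA.pos a ha; omega)
  · exact (hA.add_ne a ha t htA).2 (by omega)
  · have := hA.add_two_le a ha t htA (by omega)
    omega
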